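/- Let G be a hyperbolic TDLC group and let H be an open subgroup of G. Then H is quasiconvex in G if and only if every limit point of H is conical. -/

import Mathlib

open scoped Pointwise

/-! Basic framework for hyperbolic TDLC groups, Cayley-Abels graphs, quasiconvexity,
Gromov boundaries of locally finite graphs, and graph-of-groups decompositions
(encoded, via Bass-Serre theory, as actions on trees). -/

/-- A (second countable Hausdorff) topological group is TDLC if it is a topological group
which is locally compact and totally disconnected. -/
def IsTDLC (G : Type*) [Group G] [TopologicalSpace G] : Prop :=
  IsTopologicalGroup G ∧ LocallyCompactSpace G ∧ TotallyDisconnectedSpace G ∧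
    T2Space G ∧ SecondCountableTopology G

/-- A topological group is compactly generated if it is generated (as a group) by a
compact subset. -/
def CompactlyGeneratedGroup (G : Type*) [Group G] [TopologicalSpace G] : Prop :=
  ∃ K : Set G, IsCompact K ∧ Subgroup.closure K = ⊤

/-- The coset graph: vertices are the left cosets `gU`, and `gU`, `gaU` are joined by an
edge for `a ∈ A`. -/
def cosetGraph (G : Type*) [Group G] (U : Subgroup G) (A : Set G) :
    SimpleGraph (G ⧸ U) where
  Adj c c' := c ≠ c' ∧ ∃ x y : G, QuotientGroup.mk x = c ∧ QuotientGroup.mk y = c' ∧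
      ((∃ a ∈ A, ∃ u ∈ U, x⁻¹ * y = a * u) ∨ (∃ a ∈ A, ∃ u ∈ U, y⁻¹ * x = a * u))
  symm := by
    constructor
    rintro c c' ⟨hne, x, y, hx, hy, h⟩
    exact ⟨hne.symm, y, x, hy, hx, h.symm⟩
  loopless := by constructor; rintro c ⟨hne, -⟩; exact hne rfl

/-- The data `(U, A)` of a Cayley-Abels graph of a topological group `G`: a compact open
subgroup `U` and a finite symmetric set `A` containing the identity with `UAU = AU` and
`G = ⟨A⟩U`.  (By Krön–Möller, every Cayley-Abels graph of a compactly generated TDLC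
group arises this way.) -/
structure CayleyAbelsData (G : Type*) [Group G] [TopologicalSpace G] where
  U : Subgroup G
  A : Finset G
  U_compact : IsCompact (U : Set G)
  U_open : IsOpen (U : Set G)
  one_mem : (1 : G) ∈ A
  A_symm : ∀ a ∈ A, a⁻¹ ∈ A
  UAU_eq : (U : Set G) * (A : Set G) * (U : Set G) = (A : Set G) * (U : Set G)
  gen : ∀ g : G, ∃ b ∈ Subgroup.closure (A : Set G), ∃ u ∈ U, g = b * u

/-- The Cayley-Abels graph associated to Cayley-Abels data. -/
def caGraph {G : Type*} [Group G] [TopologicalSpace G] (d : CayleyAbelsData G) :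
    SimpleGraph (G ⧸ d.U) :=
  cosetGraph G d.U (d.A : Set G)

/-- Gromov hyperbolicity of a (connected) graph, via the four-point condition on the
graph metric. -/
def GromovHyperbolic {V : Type*} (Γ : SimpleGraph V) : Prop :=
  ∃ δ : ℕ, ∀ x y z w : V,
    Γ.dist x y + Γ.dist z w ≤ max (Γ.dist x z + Γ.dist y w) (Γ.dist x w + Γ.dist y z) + 2 * δ

/-- A compactly generated TDLC group is hyperbolic if some (equivalently, any)
Cayley-Abels graph of it is Gromov hyperbolic. -/
def IsHyperbolicGroup (G : Type*) [Group G] [TopologicalSpace G] : Prop :=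
  ∃ d : CayleyAbelsData G, GromovHyperbolic (caGraph d)

/-- A subset `S` of (the vertex set of) a graph is quasiconvex if there is `D ≥ 0` such
that every geodesic (length-minimizing walk) joining two points of `S` stays in the
`D`-neighbourhood of `S`. -/
def QuasiconvexSet {V : Type*} (Γ : SimpleGraph V) (S : Set V) : Prop :=
  ∃ D : ℕ, ∀ u v : V, u ∈ S → v ∈ S → ∀ p : Γ.Walk u v, p.length = Γ.dist u v →
    ∀ x ∈ p.support, ∃ s ∈ S, Γ.dist x s ≤ D

/-- The orbit of the vertex (coset) `c` of a coset graph under a subgroup `H`. -/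
def cosetOrbit {G : Type*} [Group G] (H U : Subgroup G) (c : G ⧸ U) : Set (G ⧸ U) :=
  {c' | ∃ h ∈ H, ∃ x : G, QuotientGroup.mk x = c ∧ QuotientGroup.mk (h * x) = c'}

/-- A subgroup `H` of `G` is quasiconvex if some `H`-orbit of a vertex of some
Cayley-Abels graph of `G` is a quasiconvex subset. -/
def QuasiconvexSubgroup {G : Type*} [Group G] [TopologicalSpace G] (H : Subgroup G) : Prop :=
  ∃ d : CayleyAbelsData G, ∃ c : G ⧸ d.U,
    QuasiconvexSet (caGraph d) (cosetOrbit H d.U c)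

/-- A (hyperbolic TDLC) group is locally quasiconvex if every open compactly generated
subgroup is quasiconvex. -/
def LocallyQuasiconvex (G : Type*) [Group G] [TopologicalSpace G] : Prop :=
  ∀ H : Subgroup G, IsOpen (H : Set G) → CompactlyGeneratedGroup ↥H → QuasiconvexSubgroup H

/-- A quasiisometric embedding between (the vertex sets of) two graphs, with respect to
the graph metrics. -/
def GraphQIEmbedding {V W : Type*} (Γ : SimpleGraph V) (Δ : SimpleGraph W) (f : V → W) :
    Prop :=
  ∃ l e : ℝ, 1 ≤ l ∧ 0 ≤ e ∧ ∀ x y : V,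
    ((Δ.dist (f x) (f y) : ℝ) ≤ l * (Γ.dist x y : ℝ) + e) ∧
    ((Γ.dist x y : ℝ) ≤ l * (Δ.dist (f x) (f y) : ℝ) + e)

/-- A quasiisometry between two graphs: a quasiisometric embedding with coarsely dense
image. -/
def GraphQuasiIsometry {V W : Type*} (Γ : SimpleGraph V) (Δ : SimpleGraph W) (f : V → W) :
    Prop :=
  GraphQIEmbedding Γ Δ f ∧ ∃ D : ℕ, ∀ w : W, ∃ v : V, Δ.dist (f v) w ≤ D

/-- `H` has height at least `n` in `G`: there are `n` pairwise distinct cosets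
`g₁H, …, gₙH` such that the intersection `⋂ᵢ gᵢ⁻¹Hgᵢ` is not compact. -/
def HeightAtLeast {G : Type*} [Group G] [TopologicalSpace G] (H : Subgroup G) (n : ℕ) :
    Prop :=
  ∃ g : Fin n → G, (∀ i j, i ≠ j → (g i)⁻¹ * g j ∉ H) ∧
    ¬ IsCompact {x : G | ∀ i, g i * x * (g i)⁻¹ ∈ H}

/-- `H` has finite height in `G`: there is a maximal `n` as above. -/
def FiniteHeight {G : Type*} [Group G] [TopologicalSpace G] (H : Subgroup G) : Prop :=
  ∃ n : ℕ, ∀ m : ℕ, HeightAtLeast H m → m ≤ n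

/-! ### Gromov boundary of a graph -/

/-- A geodesic ray in a graph. -/
def IsGeodesicRay {V : Type*} (Γ : SimpleGraph V) (r : ℕ → V) : Prop :=
  ∀ i j : ℕ, i ≤ j → Γ.dist (r i) (r j) = j - i

/-- The space of geodesic rays of a graph (topologized, for a locally finite graph, as a
subspace of the product of countably many copies of the discrete vertex set). -/
def GeodesicRay {V : Type*} (Γ : SimpleGraph V) : Type _ :=
  {r : ℕ → V // IsGeodesicRay Γ r}

/-- Two geodesic rays are equivalent when their images are at finite Hausdorff
distance. -/
def raysEquiv {V : Type*} (Γ : SimpleGraph V) (r s : GeodesicRay Γ) : Prop :=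
  ∃ C : ℕ, (∀ i, ∃ j, Γ.dist (r.1 i) (s.1 j) ≤ C) ∧ ∀ j, ∃ i, Γ.dist (r.1 i) (s.1 j) ≤ C

/-- The Gromov boundary of a (locally finite hyperbolic) graph: geodesic rays modulo
finite Hausdorff distance, with the quotient topology from the ray space. -/
def GromovBoundary {V : Type*} (Γ : SimpleGraph V) : Type _ :=
  Quot (raysEquiv Γ)

instance gromovBoundaryTopology {V : Type*} (Γ : SimpleGraph V) :
    TopologicalSpace (GromovBoundary Γ) :=
  letI : TopologicalSpace V := ⊥
  letI : TopologicalSpace (GeodesicRay Γ) :=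
    inferInstanceAs (TopologicalSpace {r : ℕ → V // IsGeodesicRay Γ r})
  inferInstanceAs (TopologicalSpace (Quot (raysEquiv Γ)))

/-- A sequence `x` in (the vertex set of) a graph converges to the boundary point `ξ` if
the Gromov products (based at `w`) of the terms of `x` with the points of a geodesic ray
representing `ξ` tend to infinity. -/
def convergesTo {V : Type*} (Γ : SimpleGraph V) (w : V) (x : ℕ → V)
    (ξ : GromovBoundary Γ) : Prop :=
  ∃ s : GeodesicRay Γ, Quot.mk (raysEquiv Γ) s = ξ ∧
    ∀ M : ℕ, ∃ N : ℕ, ∀ n k : ℕ, N ≤ n → N ≤ k →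
      M + Γ.dist (x n) (s.1 k) ≤ Γ.dist (x n) w + Γ.dist w (s.1 k)

/-- The limit set of a subset `O` of a graph: all boundary points which are limits of
sequences in `O`. -/
def limitSet {V : Type*} (Γ : SimpleGraph V) (w : V) (O : Set V) :
    Set (GromovBoundary Γ) :=
  {ξ | ∃ x : ℕ → V, (∀ n, x n ∈ O) ∧ convergesTo Γ w x ξ}

/-- A hyperbolic group is non-elementary if its Gromov boundary has at least three
points. -/
def NonElementaryHyperbolic (G : Type*) [Group G] [TopologicalSpace G] : Prop :=
  ∃ d : CayleyAbelsData G, GromovHyperbolic (caGraph d) ∧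
    ∃ a b c : GromovBoundary (caGraph d), a ≠ b ∧ a ≠ c ∧ b ≠ c

/-! ### Unordered distinct triples -/

/-- Ordered triples of pairwise distinct points of `Z`. -/
def DistinctTriple (Z : Type*) : Type _ :=
  {f : Fin 3 → Z // Function.Injective f}

/-- Two distinct triples are identified if they differ by a permutation. -/
def tripleRel (Z : Type*) (f g : DistinctTriple Z) : Prop :=
  ∃ σ : Equiv.Perm (Fin 3), f.1 = g.1 ∘ σ

/-- The space `θ(Z)` of distinct unordered triples of points of `Z`, topologized as a
quotient of a subspace of `Z³`. -/
def UnorderedTriples (Z : Type*) : Type _ :=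
  Quot (tripleRel Z)

instance distinctTripleTopology (Z : Type*) [TopologicalSpace Z] :
    TopologicalSpace (DistinctTriple Z) :=
  inferInstanceAs (TopologicalSpace {f : Fin 3 → Z // Function.Injective f})

instance unorderedTriplesTopology (Z : Type*) [TopologicalSpace Z] :
    TopologicalSpace (UnorderedTriples Z) :=
  inferInstanceAs (TopologicalSpace (Quot (tripleRel Z)))

/-! ### Graph-of-groups decompositions, via actions on trees (Bass-Serre theory).

By Bass-Serre theory, a realization of a topological group `G` as the fundamental group
of a finite graph of topological groups (with the canonical topology, in which the vertex
groups are open) is the same thing as an action of `G` on a tree, without inversions,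
with finitely many orbits of vertices and edges and with open vertex stabilizers; the
vertex (resp. edge) groups are the stabilizers of the vertices (resp. edges) of the
tree. -/
structure TreeDecomp (G : Type*) [Group G] [TopologicalSpace G] where
  V : Type*
  tree : SimpleGraph V
  isTree : tree.IsTree
  smul : G → V → V
  smul_one : ∀ v, smul 1 v = v
  smul_mul : ∀ g h v, smul (g * h) v = smul g (smul h v)
  smul_adj : ∀ g u v, tree.Adj u v → tree.Adj (smul g u) (smul g v)
  noInversions : ∀ g u v, tree.Adj u v → ¬(smul g u = v ∧ smul g v = u)
  stab_open : ∀ v, IsOpen {g : G | smul g v = v}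
  finVert : ∃ S : Finset V, ∀ v : V, ∃ g : G, ∃ s ∈ S, smul g s = v
  finEdge : ∃ S : Finset (V × V), ∀ u v : V, tree.Adj u v →
    ∃ g : G, ∃ e ∈ S, smul g e.1 = u ∧ smul g e.2 = v

/-- The stabilizer of a vertex of the tree: a "vertex group" of the corresponding graph
of groups (up to conjugacy). -/
def TreeDecomp.vStab {G : Type*} [Group G] [TopologicalSpace G] (T : TreeDecomp G)
    (v : T.V) : Subgroup G where
  carrier := {g : G | T.smul g v = v}
  one_mem' := T.smul_one v
  mul_mem' := by
    intro a b ha hb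
    simp only [Set.mem_setOf_eq] at ha hb ⊢
    rw [T.smul_mul, hb, ha]
  inv_mem' := by
    intro a ha
    simp only [Set.mem_setOf_eq] at ha ⊢
    have h1 : T.smul (a⁻¹ * a) v = v := by
      rw [inv_mul_cancel]; exact T.smul_one v
    rw [T.smul_mul, ha] at h1
    exact h1

/-- The action of `G` on the Bass-Serre tree is acylindrical: for some `k`, the pointwise
stabilizer of every geodesic of length greater than `k` is compact. -/
def TreeDecomp.Acylindrical {G : Type*} [Group G] [TopologicalSpace G]
    (T : TreeDecomp G) : Prop :=
  ∃ k : ℕ, ∀ (u v : T.V) (p : T.tree.Walk u v), p.length = T.tree.dist u v →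
    k < p.length → IsCompact {g : G | ∀ x ∈ p.support, T.smul g x = x}

/-- A limit point `ξ` of (the orbit) `O` is conical if for every geodesic ray `α`
representing `ξ` there is a radius `r ≥ 0` such that the `r`-neighbourhood of `α` meets
`O` cofinally along the ray. -/
def IsConicalLimitPoint {V : Type*} (Γ : SimpleGraph V) (O : Set V)
    (ξ : GromovBoundary Γ) : Prop :=
  ∀ α : GeodesicRay Γ, Quot.mk (raysEquiv Γ) α = ξ →
    ∃ r : ℕ, ∀ N : ℕ, ∃ i : ℕ, N ≤ i ∧ ∃ y ∈ O, Γ.dist (α.1 i) y ≤ r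


/-!
Quasiconvex implies conical: if `x n → ξ` and `α` is a ray towards `ξ`, hyperbolicity puts each
point `α i` uniformly close (in Gromov product) to a geodesic from a fixed orbit point to some
`x n`; quasiconvexity puts that geodesic near the orbit.

Conical implies quasiconvex, by contraposition: if geodesics between orbit points leave every
neighbourhood of the orbit, pick far points `z n` on them and translate the orbit point nearest
to `z n` to the base point `c`. A geodesic from `c` to `z n` then has its point at distance `t`
from `c` at distance at least `t` from the orbit. By local finiteness (Kőnig's lemma) these
geodesics accumulate on a ray `γ` from `c` with the same property, so `γ` does not represent a
conical limit point. But it represents a limit point: by the four-point condition `z n` lies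
coarsely on a geodesic from `c` to an orbit point `b n`, and the `b n` converge to `γ`.
-/

namespace SimpleGraph

variable {V : Type*} {Γ : SimpleGraph V} {u v : V}

lemma Walk.dist_getVert_le (p : Γ.Walk u v) {i j : ℕ} (hij : i ≤ j) :
    Γ.dist (p.getVert i) (p.getVert j) ≤ j - i := by
  have h := dist_le ((p.drop i).take (j - i))
  rw [Walk.take_length, Walk.drop_getVert, Nat.add_sub_cancel' hij] at h
  exact h.trans inf_le_left

lemma Walk.dist_getVert_of_length_eq_dist (p : Γ.Walk u v) (hp : p.length = Γ.dist u v)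
    {i j : ℕ} (hij : i ≤ j) (hj : j ≤ p.length) :
    Γ.dist (p.getVert i) (p.getVert j) = j - i := by
  have hi : Γ.dist u (p.getVert i) ≤ i := by simpa using p.dist_getVert_le (Nat.zero_le i)
  have hj' : Γ.dist (p.getVert j) v ≤ p.length - j := by simpa using p.dist_getVert_le hj
  have h₁ := Reachable.dist_triangle_left ⟨p.take i⟩ v
  have h₂ := Reachable.dist_triangle_right ⟨p.drop j⟩ (p.getVert i)
  have := p.dist_getVert_le hij
  omega

lemma Walk.dist_add_dist_of_mem_support (p : Γ.Walk u v) (hp : p.length = Γ.dist u v)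
    {z : V} (hz : z ∈ p.support) : Γ.dist u z + Γ.dist z v = Γ.dist u v := by
  obtain ⟨t, rfl, ht⟩ := Walk.mem_support_iff_exists_getVert.mp hz
  have h₁ := p.dist_getVert_of_length_eq_dist hp (Nat.zero_le t) ht
  have h₂ := p.dist_getVert_of_length_eq_dist hp ht le_rfl
  simp only [Walk.getVert_zero, Walk.getVert_length] at h₁ h₂
  omega

lemma Connected.finite_setOf_dist_le (hΓ : Γ.Connected) (hfin : ∀ v, (Γ.neighborSet v).Finite)
    (c : V) (R : ℕ) : {v | Γ.dist c v ≤ R}.Finite := by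
  induction R with
  | zero => simp [hΓ.dist_eq_zero_iff]
  | succ R ih =>
    refine (ih.union (ih.biUnion fun u _ ↦ hfin u)).subset fun v hv ↦ ?_
    obtain hle | hlt := le_or_gt (Γ.dist c v) R
    · exact Or.inl hle
    obtain ⟨p, hp⟩ := hΓ.exists_walk_length_eq_dist c v
    have hR : p.length = R + 1 := by simp only [Set.mem_ofPred_eq] at hv; omega
    refine Or.inr (Set.mem_biUnion (x := p.getVert R) ?_ ?_)
    · simpa using p.dist_getVert_le (Nat.zero_le R)
    · simpa [← hR] using p.adj_getVert_succ (i := R) (by omega)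

lemma Connected.dist_map_le {W : Type*} {Γ' : SimpleGraph W} (hΓ : Γ.Connected) (f : Γ →g Γ')
    (a b : V) : Γ'.dist (f a) (f b) ≤ Γ.dist a b := by
  obtain ⟨p, hp⟩ := hΓ.exists_walk_length_eq_dist a b
  simpa [hp] using dist_le (p.map f)

/-- Twice the Gromov product `(x | y)_p`; doubling keeps it an integer. -/
noncomputable def doubleGromovProduct (Γ : SimpleGraph V) (p x y : V) : ℤ :=
  Γ.dist p x + Γ.dist p y - Γ.dist x y

/-- `GromovHyperbolic Γ` unfolds to `∃ δ, Γ.FourPointCondition δ`. -/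
def FourPointCondition (Γ : SimpleGraph V) (δ : ℕ) : Prop :=
  ∀ x y z w : V,
    Γ.dist x y + Γ.dist z w ≤ max (Γ.dist x z + Γ.dist y w) (Γ.dist x w + Γ.dist y z) + 2 * δ

lemma doubleGromovProduct_comm (p x y : V) :
    Γ.doubleGromovProduct p x y = Γ.doubleGromovProduct p y x := by
  simp only [doubleGromovProduct, dist_comm (u := x)]
  ring

lemma doubleGromovProduct_add_doubleGromovProduct (p q x : V) :
    Γ.doubleGromovProduct p q x + Γ.doubleGromovProduct q p x = 2 * Γ.dist p q := by
  simp only [doubleGromovProduct, dist_comm (u := q) (v := p)]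
  ring

lemma Connected.doubleGromovProduct_le_basepoint (hΓ : Γ.Connected) (p q x y : V) :
    Γ.doubleGromovProduct p x y ≤ Γ.doubleGromovProduct q x y + 2 * Γ.dist p q := by
  have := hΓ.dist_triangle (u := p) (v := q) (w := x)
  have := hΓ.dist_triangle (u := p) (v := q) (w := y)
  simp only [doubleGromovProduct]
  omega

lemma Connected.doubleGromovProduct_le_left (hΓ : Γ.Connected) (p x x' y : V) :
    Γ.doubleGromovProduct p x y ≤ Γ.doubleGromovProduct p x' y + 2 * Γ.dist x x' := by
  have := hΓ.dist_triangle (u := p) (v := x') (w := x)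
  have := hΓ.dist_triangle (u := x') (v := x) (w := y)
  have := dist_comm (G := Γ) (u := x) (v := x')
  simp only [doubleGromovProduct]
  omega

namespace FourPointCondition

variable {δ : ℕ}

lemma min_le_doubleGromovProduct (hδ : Γ.FourPointCondition δ) (p x y z : V) :
    min (Γ.doubleGromovProduct p x y) (Γ.doubleGromovProduct p y z) - 2 * δ ≤
      Γ.doubleGromovProduct p x z := by
  have h := hδ x z y p
  have := dist_comm (G := Γ) (u := x) (v := p)
  have := dist_comm (G := Γ) (u := y) (v := p)
  have := dist_comm (G := Γ) (u := z) (v := p)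
  have := dist_comm (G := Γ) (u := z) (v := y)
  simp only [doubleGromovProduct]
  omega

lemma doubleGromovProduct_le_or_le (hδ : Γ.FourPointCondition δ) {z u v : V}
    (hz : Γ.dist u z + Γ.dist z v = Γ.dist u v) (c : V) :
    Γ.doubleGromovProduct z c u ≤ 2 * δ ∨ Γ.doubleGromovProduct z c v ≤ 2 * δ := by
  have h := hδ.min_le_doubleGromovProduct z u c v
  have : Γ.doubleGromovProduct z u v = 0 := by
    simp only [doubleGromovProduct, dist_comm (u := z) (v := u)]
    omega
  rw [doubleGromovProduct_comm z u c] at h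
  omega

lemma exists_getVert_two_mul_dist_le (hδ : Γ.FourPointCondition δ) (hΓ : Γ.Connected)
    {a b : V} (p : Γ.Walk a b) (hp : p.length = Γ.dist a b) (m : V) :
    ∃ t ≤ p.length,
      2 * (Γ.dist m (p.getVert t) : ℤ) ≤ Γ.doubleGromovProduct m a b + 4 * δ + 2 := by
  have := hΓ.dist_triangle (u := a) (v := b) (w := m)
  have := hΓ.dist_triangle (u := b) (v := a) (w := m)
  have := dist_comm (G := Γ) (u := a) (v := b)
  -- `t` is the Gromov product `(b | m)_a`, rounded down
  set t := (p.length + Γ.dist a m - Γ.dist b m) / 2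
  have htL : t ≤ p.length := by omega
  refine ⟨t, htL, ?_⟩
  have hta := p.dist_getVert_of_length_eq_dist hp (Nat.zero_le t) htL
  have htb := p.dist_getVert_of_length_eq_dist hp htL le_rfl
  simp only [Walk.getVert_zero, Walk.getVert_length] at hta htb
  have h := hδ m (p.getVert t) a b
  have := dist_comm (G := Γ) (u := p.getVert t) (v := a)
  have := dist_comm (G := Γ) (u := m) (v := a)
  have := dist_comm (G := Γ) (u := m) (v := b)
  simp only [doubleGromovProduct]
  omega

end FourPointCondition

end SimpleGraph

section GromovBoundary

open SimpleGraph MulAction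

variable {V : Type*} {Γ : SimpleGraph V} {δ : ℕ}

lemma raysEquiv_equivalence (hΓ : Γ.Connected) : Equivalence (raysEquiv Γ) where
  refl _ := ⟨0, fun i ↦ ⟨i, by simp⟩, fun j ↦ ⟨j, by simp⟩⟩
  symm := by
    rintro r s ⟨C, h₁, h₂⟩
    exact ⟨C, fun i ↦ (h₂ i).imp fun _ h ↦ dist_comm.trans_le h,
      fun j ↦ (h₁ j).imp fun _ h ↦ dist_comm.trans_le h⟩
  trans := by
    rintro r s t ⟨C₁, h₁₁, h₁₂⟩ ⟨C₂, h₂₁, h₂₂⟩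
    refine ⟨C₁ + C₂, fun i ↦ ?_, fun k ↦ ?_⟩
    · obtain ⟨j, hj⟩ := h₁₁ i
      obtain ⟨k, hk⟩ := h₂₁ j
      exact ⟨k, hΓ.dist_triangle.trans (add_le_add hj hk)⟩
    · obtain ⟨j, hj⟩ := h₂₂ k
      obtain ⟨i, hi⟩ := h₁₂ j
      exact ⟨i, hΓ.dist_triangle.trans (add_le_add hi hj)⟩

lemma raysEquiv_of_mk_eq_mk (hΓ : Γ.Connected) {r s : GeodesicRay Γ}
    (h : Quot.mk (raysEquiv Γ) r = Quot.mk (raysEquiv Γ) s) : raysEquiv Γ r s :=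
  (raysEquiv_equivalence hΓ).eqvGen_iff.mp (Quot.eq.mp h)

lemma IsGeodesicRay.doubleGromovProduct_eq {s : ℕ → V} (hs : IsGeodesicRay Γ s) (i j : ℕ) :
    Γ.doubleGromovProduct (s 0) (s i) (s j) = 2 * min i j := by
  have hi := hs 0 i (Nat.zero_le i)
  have hj := hs 0 j (Nat.zero_le j)
  rcases le_total i j with hij | hji
  · have := hs i j hij
    simp only [doubleGromovProduct]
    omega
  · have := hs j i hji
    have := dist_comm (G := Γ) (u := s i) (v := s j)
    simp only [doubleGromovProduct]
    omega

/-- `convergesTo Γ w x ξ` unfolds to `∃ s, Quot.mk _ s = ξ ∧ TendstoRay Γ w x s`. -/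
def TendstoRay (Γ : SimpleGraph V) (w : V) (x : ℕ → V) (s : GeodesicRay Γ) : Prop :=
  ∀ M : ℕ, ∃ N : ℕ, ∀ n k : ℕ, N ≤ n → N ≤ k →
    M + Γ.dist (x n) (s.1 k) ≤ Γ.dist (x n) w + Γ.dist w (s.1 k)

lemma tendstoRay_of_le_doubleGromovProduct (hΓ : Γ.Connected) {c : V} {x : ℕ → V}
    {s : GeodesicRay Γ} (K : ℤ)
    (h : ∀ m k, 2 * (min m k : ℕ) - K ≤ Γ.doubleGromovProduct c (x m) (s.1 k)) (w : V) :
    TendstoRay Γ w x s := by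
  intro M
  refine ⟨M + K.toNat + 2 * Γ.dist c w, fun n k hn hk ↦ ?_⟩
  have h₁ := h n k
  have h₂ := hΓ.doubleGromovProduct_le_basepoint c w (x n) (s.1 k)
  have := dist_comm (G := Γ) (u := x n) (v := w)
  simp only [doubleGromovProduct] at h₁ h₂
  omega

lemma SimpleGraph.FourPointCondition.exists_doubleGromovProduct_le_of_tendstoRay
    (hδ : Γ.FourPointCondition δ) (hΓ : Γ.Connected) {w : V} {x : ℕ → V} {s : GeodesicRay Γ}
    (hx : TendstoRay Γ w x s) : ∃ K : ℤ, ∀ j, ∃ n, Γ.doubleGromovProduct (s.1 j) w (x n) ≤ K := by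
  refine ⟨4 * Γ.dist w (s.1 0) + 2 * δ, fun j ↦ ?_⟩
  obtain ⟨N, hN⟩ := hx (2 * Γ.dist w (s.1 j))
  have hxs := hN N (max N j) le_rfl (le_max_left N j)
  have hss := s.2.doubleGromovProduct_eq (max N j) j
  have hw := hΓ.doubleGromovProduct_le_basepoint (s.1 0) w (s.1 (max N j)) (s.1 j)
  have hsj := s.2 0 j (Nat.zero_le j)
  have := hΓ.dist_triangle (u := w) (v := s.1 0) (w := s.1 j)
  have := dist_comm (G := Γ) (u := w) (v := s.1 0)
  have := dist_comm (G := Γ) (u := x N) (v := w)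
  have hmin := hδ.min_le_doubleGromovProduct w (x N) (s.1 (max N j)) (s.1 j)
  have hswap := doubleGromovProduct_add_doubleGromovProduct (Γ := Γ) (s.1 j) w (x N)
  -- `(x N | s j)_w ≥ 2 d(w, s j) - 4 d(w, s 0) - 2δ`, and `(w | x N)_{s j}` is its complement
  -- in `2 d(w, s j)`
  refine ⟨N, ?_⟩
  rw [doubleGromovProduct_comm w (s.1 j), dist_comm] at hswap
  simp only [doubleGromovProduct] at hxs hss hw hmin hswap ⊢
  omega

lemma QuasiconvexSet.exists_two_mul_dist_le (hδ : Γ.FourPointCondition δ) (hΓ : Γ.Connected)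
    {O : Set V} (hO : QuasiconvexSet Γ O) :
    ∃ K : ℤ, ∀ x ∈ O, ∀ y ∈ O, ∀ m, ∃ z ∈ O,
      2 * (Γ.dist m z : ℤ) ≤ Γ.doubleGromovProduct m x y + K := by
  obtain ⟨D, hD⟩ := hO
  refine ⟨4 * δ + 2 + 2 * D, fun x hx y hy m ↦ ?_⟩
  obtain ⟨p, hp⟩ := hΓ.exists_walk_length_eq_dist x y
  obtain ⟨t, ht, hmt⟩ := hδ.exists_getVert_two_mul_dist_le hΓ p hp m
  obtain ⟨z, hz, hdz⟩ := hD x y hx hy p hp _ (Walk.mem_support_iff_exists_getVert.mpr ⟨t, rfl, ht⟩)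
  have := hΓ.dist_triangle (u := m) (v := p.getVert t) (w := z)
  exact ⟨z, hz, by omega⟩

lemma isConicalLimitPoint_of_quasiconvexSet (hδ : Γ.FourPointCondition δ) (hΓ : Γ.Connected)
    {O : Set V} (hO : QuasiconvexSet Γ O) {w : V} {ξ : GromovBoundary Γ}
    (hξ : ξ ∈ limitSet Γ w O) : IsConicalLimitPoint Γ O ξ := by
  obtain ⟨x, hxO, s, rfl, hx⟩ := hξ
  obtain ⟨K₁, hK₁⟩ := hδ.exists_doubleGromovProduct_le_of_tendstoRay hΓ hx
  obtain ⟨K₂, hK₂⟩ := hO.exists_two_mul_dist_le hδ hΓ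
  intro α hα
  obtain ⟨C, hC, -⟩ := raysEquiv_of_mk_eq_mk hΓ hα
  refine ⟨(K₁ + K₂).toNat + 2 * Γ.dist w (x 0) + 2 * C, fun N ↦ ⟨N, le_rfl, ?_⟩⟩
  obtain ⟨j, hj⟩ := hC N
  obtain ⟨n, hn⟩ := hK₁ j
  obtain ⟨z, hz, hdz⟩ := hK₂ (x 0) (hxO 0) (x n) (hxO n) (α.1 N)
  have h₁ := hΓ.doubleGromovProduct_le_basepoint (α.1 N) (s.1 j) (x 0) (x n)
  have h₂ := hΓ.doubleGromovProduct_le_left (s.1 j) (x 0) w (x n)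
  have := dist_comm (G := Γ) (u := x 0) (v := w)
  exact ⟨z, hz, by omega⟩

lemma SimpleGraph.Connected.exists_geodesicRay_of_le_dist (hΓ : Γ.Connected)
    (hfin : ∀ v, (Γ.neighborSet v).Finite) (c : V) {z : ℕ → V} (hz : ∀ n, n ≤ Γ.dist c (z n)) :
    ∃ γ : GeodesicRay Γ, γ.1 0 = c ∧
      ∀ m, ∃ n, Γ.dist c (γ.1 m) + Γ.dist (γ.1 m) (z n) = Γ.dist c (z n) := by
  choose p hp using fun n ↦ hΓ.exists_walk_length_eq_dist c (z n)
  -- Kőnig's lemma, as compactness of a product of finite balls in the discrete topology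
  let _ : TopologicalSpace V := ⊥
  have _ : DiscreteTopology V := ⟨rfl⟩
  have hK : IsCompact (Set.univ.pi fun t : ℕ ↦ {v | Γ.dist c v ≤ t}) :=
    isCompact_univ_pi fun t ↦ (hΓ.finite_setOf_dist_le hfin c t).isCompact
  obtain ⟨γ, -, hγ⟩ := hK.exists_mapClusterPt (f := Filter.atTop)
    (u := fun n t ↦ (p n).getVert t) <| Filter.tendsto_principal.2 <|
      .of_forall fun n t _ ↦ by simpa using (p n).dist_getVert_le (Nat.zero_le t)
  have hagree : ∀ m, ∃ n ≥ m, ∀ t ≤ m, (p n).getVert t = γ t := by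
    intro m
    have hnhds : ∀ᶠ g in nhds γ, ∀ t ∈ Set.Iic m, g t = γ t :=
      (Filter.eventually_all_finite (Set.finite_Iic m)).2 fun t _ ↦
        (continuous_apply t).continuousAt.eventually_mem ((isOpen_discrete {γ t}).mem_nhds rfl)
    exact Filter.frequently_atTop.mp (hγ.frequently hnhds) m
  refine ⟨⟨γ, fun i j hij ↦ ?_⟩, ?_, fun m ↦ ?_⟩
  · obtain ⟨n, hn, hγn⟩ := hagree j
    rw [← hγn i hij, ← hγn j le_rfl]
    exact (p n).dist_getVert_of_length_eq_dist (hp n) hij ((hz n).trans' hn |>.trans_eq (hp n).symm)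
  · obtain ⟨n, -, hγn⟩ := hagree 0
    simpa using (hγn 0 le_rfl).symm
  · obtain ⟨n, -, hγn⟩ := hagree m
    refine ⟨n, ?_⟩
    change Γ.dist c (γ m) + Γ.dist (γ m) (z n) = Γ.dist c (z n)
    rw [← hγn m le_rfl]
    simpa using (p n).dist_add_dist_of_mem_support (hp n) ((p n).getVert_mem_support m)

variable {H : Type*} [Group H] [MulAction H V]

lemma SimpleGraph.FourPointCondition.exists_far_of_not_quasiconvexSet
    (hδ : Γ.FourPointCondition δ) (hH : ∀ (h : H) x y, Γ.dist (h • x) (h • y) = Γ.dist x y)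
    {c : V} (hO : ¬QuasiconvexSet Γ (orbit H c)) (n : ℕ) :
    ∃ z, n < Γ.dist c z ∧ (∀ y ∈ orbit H c, Γ.dist c z ≤ Γ.dist z y) ∧
      ∃ b ∈ orbit H c, Γ.doubleGromovProduct z c b ≤ 2 * δ := by
  simp only [QuasiconvexSet] at hO
  push Not at hO
  obtain ⟨u, v, hu, hv, p, hp, z, hz, hzO⟩ := hO n
  have hzuv := p.dist_add_dist_of_mem_support hp hz
  obtain ⟨_, ⟨h, rfl⟩, hmin⟩ : ∃ y₀ ∈ orbit H c, ∀ y ∈ orbit H c, Γ.dist z y₀ ≤ Γ.dist z y :=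
    ⟨_, Function.argminOn_mem _ _ ⟨c, mem_orbit_self c⟩,
      fun y hy ↦ Function.argminOn_le (Γ.dist z) _ hy⟩
  have hmem : ∀ (g : H), ∀ y ∈ orbit H c, g • y ∈ orbit H c := by
    rintro g _ ⟨k, rfl⟩
    exact ⟨g * k, mul_smul g k c⟩
  have hdist : ∀ x y, Γ.dist (h⁻¹ • x) y = Γ.dist x (h • y) := fun x y ↦ by
    rw [← hH h, smul_inv_smul]
  -- `h • c` is an orbit point nearest to `z`; translating by `h⁻¹` moves it to `c`
  refine ⟨h⁻¹ • z, ?_, fun y hy ↦ ?_, ?_⟩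
  · rw [dist_comm, hdist]
    exact hzO _ (mem_orbit _ _)
  · rw [dist_comm, hdist, hdist]
    exact hmin _ (hmem h y hy)
  rw [← hH h⁻¹ u z, ← hH h⁻¹ z v, ← hH h⁻¹ u v] at hzuv
  obtain hb | hb := hδ.doubleGromovProduct_le_or_le hzuv c
  exacts [⟨_, hmem _ u hu, hb⟩, ⟨_, hmem _ v hv, hb⟩]

lemma SimpleGraph.FourPointCondition.exists_mem_limitSet_not_isConicalLimitPoint
    (hδ : Γ.FourPointCondition δ) (hΓ : Γ.Connected) (hfin : ∀ v, (Γ.neighborSet v).Finite)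
    (hH : ∀ (h : H) x y, Γ.dist (h • x) (h • y) = Γ.dist x y) {c : V}
    (hO : ¬QuasiconvexSet Γ (orbit H c)) (w : V) :
    ∃ ξ ∈ limitSet Γ w (orbit H c), ¬IsConicalLimitPoint Γ (orbit H c) ξ := by
  choose z hzc hzO b hb hbz using hδ.exists_far_of_not_quasiconvexSet hH hO
  obtain ⟨γ, hγ0, hγz⟩ := hΓ.exists_geodesicRay_of_le_dist hfin c fun n ↦ (hzc n).le
  choose n hn using hγz
  have hγc : ∀ m, Γ.dist c (γ.1 m) = m := fun m ↦ by simpa [hγ0] using γ.2 0 m (Nat.zero_le m)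
  have hfar : ∀ i, ∀ y ∈ orbit H c, i ≤ Γ.dist (γ.1 i) y := by
    intro i y hy
    have := hzO (n i) y hy
    have := hΓ.dist_triangle (u := z (n i)) (v := γ.1 i) (w := y)
    have := dist_comm (G := Γ) (u := z (n i)) (v := γ.1 i)
    have := hn i
    have := hγc i
    omega
  have hlim : TendstoRay Γ w (fun m ↦ b (n m)) γ := by
    refine tendstoRay_of_le_doubleGromovProduct hΓ (c := c) (6 * δ) (fun m k ↦ ?_) w
    have hγ := γ.2.doubleGromovProduct_eq m k
    have hzb := doubleGromovProduct_add_doubleGromovProduct (Γ := Γ) c (z (n m)) (b (n m))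
    have h₁ := hδ.min_le_doubleGromovProduct c (γ.1 m) (z (n m)) (b (n m))
    have h₂ := hδ.min_le_doubleGromovProduct c (b (n m)) (γ.1 m) (γ.1 k)
    rw [hγ0] at hγ
    rw [doubleGromovProduct_comm c (b (n m))] at h₂
    have := hn m
    have := hγc m
    have hP : Γ.doubleGromovProduct c (γ.1 m) (z (n m)) = 2 * m := by
      simp only [doubleGromovProduct]
      omega
    -- `(z | b)_c ≥ 2 d(c, z) - 2δ ≥ 2m - 2δ`, so `(γ m | b)_c ≥ 2m - 4δ`
    have := hbz (n m)
    omega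
  refine ⟨_, ⟨_, fun m ↦ hb (n m), γ, rfl, hlim⟩, fun hcon ↦ ?_⟩
  obtain ⟨r, hr⟩ := hcon γ rfl
  obtain ⟨i, hi, y, hy, hiy⟩ := hr (r + 1)
  have := hfar i y hy
  omega

end GromovBoundary

section CayleyAbels

open SimpleGraph

variable {G : Type*} [Group G]

lemma cosetGraph_adj_smul {U : Subgroup G} {A : Set G} (g : G) {c c' : G ⧸ U}
    (h : (cosetGraph G U A).Adj c c') : (cosetGraph G U A).Adj (g • c) (g • c') := by
  obtain ⟨hne, x, y, rfl, rfl, hxy⟩ := h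
  have hg : ∀ a b : G, (g * a)⁻¹ * (g * b) = a⁻¹ * b := fun a b ↦ by group
  exact ⟨fun h ↦ hne (MulAction.injective g h), g * x, g * y, rfl, rfl,
    by simpa only [hg] using hxy⟩

lemma cosetOrbit_eq_orbit (H U : Subgroup G) (c : G ⧸ U) :
    cosetOrbit H U c = MulAction.orbit H c := by
  ext o
  constructor
  · rintro ⟨h, hH, x, rfl, rfl⟩
    exact ⟨⟨h, hH⟩, rfl⟩
  · rintro ⟨⟨h, hH⟩, rfl⟩
    obtain ⟨x, rfl⟩ := QuotientGroup.mk_surjective c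
    exact ⟨h, hH, x, rfl, rfl⟩

variable [TopologicalSpace G] (d : CayleyAbelsData G)

@[simps]
def caGraphSMulHom (g : G) : caGraph d →g caGraph d where
  toFun := (g • ·)
  map_rel' := cosetGraph_adj_smul g

lemma caGraph_connected : (caGraph d).Connected := by
  have hreach : ∀ b ∈ Subgroup.closure (d.A : Set G),
      (caGraph d).Reachable (QuotientGroup.mk 1) (QuotientGroup.mk b) := by
    intro b hb
    induction hb using Subgroup.closure_induction with
    | mem a ha =>
      by_cases h : (QuotientGroup.mk 1 : G ⧸ d.U) = QuotientGroup.mk a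
      · rw [h]
      · exact Adj.reachable ⟨h, 1, a, rfl, rfl, .inl ⟨a, ha, 1, d.U.one_mem, by group⟩⟩
    | one => rfl
    | mul a b _ _ ha hb =>
      exact ha.trans (by simpa using hb.map (caGraphSMulHom d a))
    | inv a _ ha =>
      exact .symm (by simpa using ha.map (caGraphSMulHom d a⁻¹))
  have hreach' : ∀ g : G, (caGraph d).Reachable (QuotientGroup.mk 1) (QuotientGroup.mk g) := by
    intro g
    obtain ⟨b, hb, u, hu, rfl⟩ := d.gen g
    rw [QuotientGroup.mk_mul_of_mem b hu]
    exact hreach b hb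
  refine ⟨fun c c' ↦ ?_⟩
  obtain ⟨x, rfl⟩ := QuotientGroup.mk_surjective c
  obtain ⟨y, rfl⟩ := QuotientGroup.mk_surjective c'
  exact (hreach' x).symm.trans (hreach' y)

lemma mem_mul_of_caGraph_adj {x y : G} (h : (caGraph d).Adj (x : G ⧸ d.U) y) :
    x⁻¹ * y ∈ (d.A : Set G) * d.U := by
  obtain ⟨-, x₁, y₁, hx, hy, hxy⟩ := h
  have hx₁ : x⁻¹ * x₁ ∈ d.U := by simpa using d.U.inv_mem (QuotientGroup.eq.mp hx)
  have hy₁ : y₁⁻¹ * y ∈ d.U := QuotientGroup.eq.mp hy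
  rw [← d.UAU_eq]
  rcases hxy with ⟨a, ha, u, hu, he⟩ | ⟨a, ha, u, hu, he⟩
  · have : x⁻¹ * y = x⁻¹ * x₁ * a * (u * (y₁⁻¹ * y)) := by
      rw [mul_assoc _ a, ← mul_assoc a, ← he]
      group
    rw [this]
    exact Set.mul_mem_mul (Set.mul_mem_mul hx₁ ha) (d.U.mul_mem hu hy₁)
  · have : x⁻¹ * y = x⁻¹ * x₁ * u⁻¹ * a⁻¹ * (y₁⁻¹ * y) := by
      rw [mul_assoc _ u⁻¹, ← mul_inv_rev, ← he]
      group
    rw [this]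
    exact Set.mul_mem_mul (Set.mul_mem_mul (d.U.mul_mem hx₁ (d.U.inv_mem hu)) (d.A_symm a ha)) hy₁

lemma caGraph_neighborSet_finite (c : G ⧸ d.U) : ((caGraph d).neighborSet c).Finite := by
  obtain ⟨x, rfl⟩ := QuotientGroup.mk_surjective c
  refine ((d.A : Set G).toFinite.image fun a ↦ ((x * a : G) : G ⧸ d.U)).subset fun c' hc' ↦ ?_
  obtain ⟨y, rfl⟩ := QuotientGroup.mk_surjective c'
  obtain ⟨a, ha, u, hu, he⟩ := mem_mul_of_caGraph_adj d hc'
  refine ⟨a, ha, QuotientGroup.eq.mpr ?_⟩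
  rwa [mul_inv_rev, mul_assoc, ← he, inv_mul_cancel_left]

lemma caGraph_dist_smul (g : G) (a b : G ⧸ d.U) :
    (caGraph d).dist (g • a) (g • b) = (caGraph d).dist a b :=
  le_antisymm ((caGraph_connected d).dist_map_le (caGraphSMulHom d g) a b)
    (by simpa using (caGraph_connected d).dist_map_le (caGraphSMulHom d g⁻¹) (g • a) (g • b))

end CayleyAbels

theorem quasiconvex_iff_conical_limit_points_general
    (G : Type*) [Group G] [TopologicalSpace G]
    (H : Subgroup G) :
    ∀ d : CayleyAbelsData G, GromovHyperbolic (caGraph d) →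
      ∀ c w : G ⧸ d.U,
        (QuasiconvexSet (caGraph d) (cosetOrbit H d.U c) ↔
          ∀ ξ ∈ limitSet (caGraph d) w (cosetOrbit H d.U c),
            IsConicalLimitPoint (caGraph d) (cosetOrbit H d.U c) ξ) := by
  intro d ⟨δ, (hδ : (caGraph d).FourPointCondition δ)⟩ c w
  have hΓ := caGraph_connected d
  have hH : ∀ (h : H) x y, (caGraph d).dist (h • x) (h • y) = (caGraph d).dist x y :=
    fun h ↦ caGraph_dist_smul d h
  rw [cosetOrbit_eq_orbit]
  refine ⟨fun hO ξ hξ ↦ isConicalLimitPoint_of_quasiconvexSet hδ hΓ hO hξ, fun hcon ↦ ?_⟩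
  by_contra hO
  obtain ⟨ξ, hξ, hnot⟩ := hδ.exists_mem_limitSet_not_isConicalLimitPoint hΓ
    (caGraph_neighborSet_finite d) hH hO w
  exact hnot (hcon ξ hξ)

/-- Quasiconvexity is equivalent to all limit points being conical.
Let `G` be a hyperbolic TDLC group and let `H` be an open subgroup of `G`. Then, with
respect to any (hyperbolic) Cayley-Abels graph of `G` and any `H`-orbit of a vertex, `H`
is quasiconvex in `G` if and only if every limit point of `H` is conical. -/
theorem quasiconvex_iff_conical_limit_points
    (G : Type*) [Group G] [TopologicalSpace G] [IsTopologicalGroup G]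
    [T2Space G] [SecondCountableTopology G]
    (hGtdlc : IsTDLC G) (hGhyp : IsHyperbolicGroup G)
    (H : Subgroup G) (hopen : IsOpen (H : Set G)) :
    ∀ d : CayleyAbelsData G, GromovHyperbolic (caGraph d) →
      ∀ c w : G ⧸ d.U,
        (QuasiconvexSet (caGraph d) (cosetOrbit H d.U c) ↔
          ∀ ξ ∈ limitSet (caGraph d) w (cosetOrbit H d.U c),
            IsConicalLimitPoint (caGraph d) (cosetOrbit H d.U c) ξ) :=
  quasiconvex_iff_conical_limit_points_general G H
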